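/- For any integer n ≥ 1 and any real r ≥ 1, let D = 2r·log log q^n and define T₃(n,r) = { monic f ∈ F_q[t] : deg f = n and P^e divides f for some irreducible polynomial P with deg P ≤ D and some integer e ≥ D }. If D ≥ 8, then |T₃(n,r)| < q^n/(log q^n)^r. -/

import Mathlib

open Polynomial

/-- `T₃(n, r)`: monic polynomials `f` of degree `n` such that `P^e ∣ f` for some
irreducible polynomial `P` with `deg P ≤ D` and some integer `e ≥ D`, where
`D = 2 r log log q^n`. -/
noncomputable def T3 (F : Type*) [Field F] [Fintype F] (n : ℕ) (r : ℝ) : Set F[X] :=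
  {f : F[X] | f.Monic ∧ f.natDegree = n ∧
    ∃ P : F[X], Irreducible P ∧
      (P.natDegree : ℝ) ≤ 2 * r * Real.log (Real.log ((Fintype.card F : ℝ) ^ n)) ∧
      ∃ e : ℕ, 2 * r * Real.log (Real.log ((Fintype.card F : ℝ) ^ n)) ≤ (e : ℝ) ∧
        P ^ e ∣ f}

/-- The finset of "candidate" monic polynomials of degree `k`:
images of coefficient tuples. -/
noncomputable def msetAux (F : Type*) [Field F] [Fintype F] (k : ℕ) : Finset F[X] :=
  letI : DecidableEq F[X] := Classical.decEq _
  (Finset.univ : Finset (Fin k → F)).image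
    (fun c => X ^ k + ∑ i : Fin k, C (c i) * X ^ (i : ℕ))

lemma card_msetAux_le (F : Type*) [Field F] [Fintype F] (k : ℕ) :
    (msetAux F k).card ≤ Fintype.card F ^ k := by
  letI : DecidableEq F[X] := Classical.decEq _
  refine Finset.card_image_le.trans ?_
  rw [Finset.card_univ, Fintype.card_fun, Fintype.card_fin]

lemma mem_msetAux {F : Type*} [Field F] [Fintype F] {p : F[X]} {k : ℕ}
    (hm : p.Monic) (hd : p.natDegree = k) : p ∈ msetAux F k := by
  letI : DecidableEq F[X] := Classical.decEq _
  refine Finset.mem_image.mpr ⟨fun i : Fin k => p.coeff i, Finset.mem_univ _, ?_⟩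
  ext j
  rw [coeff_add, coeff_X_pow, finset_sum_coeff]
  simp only [coeff_C_mul, coeff_X_pow, mul_ite, mul_one, mul_zero]
  rcases lt_trichotomy j k with h | h | h
  · rw [if_neg (by omega), Finset.sum_eq_single (⟨j, h⟩ : Fin k)]
    · simp
    · intro b _ hb
      have hbj : (b : ℕ) ≠ j := fun hc => hb (by ext; exact hc)
      exact if_neg (fun hc => hbj hc.symm)
    · simp
  · rw [if_pos h,
      Finset.sum_eq_zero (fun i _ => if_neg (by have := i.isLt; omega)),
      add_zero, h, ← hd]
    exact hm.coeff_natDegree.symm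
  · rw [if_neg (by omega),
      Finset.sum_eq_zero (fun i _ => if_neg (by have := i.isLt; omega)),
      add_zero]
    exact (coeff_eq_zero_of_natDegree_lt (by omega)).symm

/-- Lemma 2.9: for `n ≥ 1`, `r ≥ 1` and `D = 2 r log log q^n ≥ 8`, one has
`|T₃(n,r)| < q^n / (log q^n)^r`. -/
theorem card_T3_lt (F : Type*) [Field F] [Fintype F] (n : ℕ) (hn : 1 ≤ n) (r : ℝ)
    (hr : 1 ≤ r)
    (hD : 8 ≤ 2 * r * Real.log (Real.log ((Fintype.card F : ℝ) ^ n))) :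
    (Nat.card (T3 F n r) : ℝ) <
      (Fintype.card F : ℝ) ^ n / Real.log ((Fintype.card F : ℝ) ^ n) ^ r := by
  classical
  set q : ℕ := Fintype.card F with hq
  set L : ℝ := Real.log ((q : ℝ) ^ n) with hL
  set D : ℝ := 2 * r * Real.log L with hDdef
  set m : ℕ := ⌈D⌉₊ with hm
  -- basic facts
  have hq2 : 2 ≤ q := Fintype.one_lt_card
  have hq2R : (2 : ℝ) ≤ (q : ℝ) := by exact_mod_cast hq2
  have hq0R : (0 : ℝ) < (q : ℝ) := by linarith
  have hqn1 : (1 : ℝ) < (q : ℝ) ^ n := one_lt_pow₀ (by linarith) (by omega)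
  have hL0 : 0 < L := Real.log_pos hqn1
  have hmD : D ≤ (m : ℝ) := Nat.le_ceil D
  have hm8 : 8 ≤ m := by
    have : (8 : ℝ) ≤ (m : ℝ) := le_trans hD hmD
    exact_mod_cast this
  have hm0 : 0 < m := by omega
  set K : ℕ := n / m with hK
  -- the covering finset
  set A : Finset F[X] := (Finset.Icc 1 K).biUnion
    (fun d => ((msetAux F d) ×ˢ (msetAux F (n - m * d))).image
      (fun pg => pg.1 ^ m * pg.2)) with hA
  -- T3 ⊆ A
  have hsub : T3 F n r ⊆ (A : Set F[X]) := by
    rintro f ⟨hmon, hdeg, P, hPirr, hPdeg, e, he, hdvd⟩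
    have hP0 : P ≠ 0 := hPirr.ne_zero
    set Q : F[X] := normalize P with hQ
    have hQmon : Q.Monic := monic_normalize hP0
    have hQirr : Irreducible Q := (associated_normalize P).irreducible hPirr
    have hem : m ≤ e := Nat.ceil_le.mpr he
    have hQe : Q ^ e ∣ f := ((normalize_associated P).pow_pow).dvd.trans hdvd
    have hQm : Q ^ m ∣ f := (pow_dvd_pow Q hem).trans hQe
    obtain ⟨g, hg⟩ := hQm
    have hgmon : g.Monic := (hQmon.pow m).of_mul_monic_left (hg ▸ hmon)
    have hd1 : 1 ≤ Q.natDegree := hQirr.natDegree_pos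
    have hsum : m * Q.natDegree + g.natDegree = n := by
      have h2 := (hQmon.pow m).natDegree_mul hgmon
      rw [← hg, hdeg, natDegree_pow] at h2
      omega
    have hmd : m * Q.natDegree ≤ n := by omega
    have hdK : Q.natDegree ≤ K := (Nat.le_div_iff_mul_le hm0).mpr
      (by rw [Nat.mul_comm]; exact hmd)
    refine Finset.mem_coe.mpr (Finset.mem_biUnion.mpr ⟨Q.natDegree,
      Finset.mem_Icc.mpr ⟨hd1, hdK⟩,
      Finset.mem_image.mpr ⟨(Q, g), Finset.mem_product.mpr
        ⟨mem_msetAux hQmon rfl, mem_msetAux hgmon (show g.natDegree = n - m * Q.natDegree by omega)⟩, hg.symm⟩⟩)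
  -- cardinality bound over ℕ
  have hcard1 : Nat.card (T3 F n r) ≤ A.card := by
    have := Set.ncard_le_ncard hsub A.finite_toSet
    rwa [Set.ncard_coe_finset, ← Nat.card_coe_set_eq] at this
  have hcard2 : A.card ≤ ∑ d ∈ Finset.Icc 1 K, q ^ (d + (n - m * d)) := by
    refine Finset.card_biUnion_le.trans (Finset.sum_le_sum fun d _ => ?_)
    refine Finset.card_image_le.trans ?_
    rw [Finset.card_product, pow_add]
    exact Nat.mul_le_mul (card_msetAux_le F d) (card_msetAux_le F (n - m * d))
  -- real geometric bound
  set x : ℝ := ((q : ℝ) ^ (m - 1))⁻¹ with hx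
  have hqm0 : (0 : ℝ) < (q : ℝ) ^ (m - 1) := pow_pos hq0R _
  have hqm2 : (2 : ℝ) ≤ (q : ℝ) ^ (m - 1) := by
    calc (2 : ℝ) = 2 ^ 1 := by norm_num
    _ ≤ (2 : ℝ) ^ (m - 1) := pow_le_pow_right₀ (by norm_num) (by omega)
    _ ≤ (q : ℝ) ^ (m - 1) := pow_le_pow_left₀ (by norm_num) hq2R _
  have hx0 : 0 < x := inv_pos.mpr hqm0
  have hxhalf : x ≤ 1 / 2 := by
    rw [hx, inv_le_comm₀ hqm0 (by norm_num)]
    norm_num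
    linarith
  have hsum3 : (∑ d ∈ Finset.Icc 1 K, ((q : ℝ)) ^ (d + (n - m * d)))
      ≤ 2 * (q : ℝ) ^ n * x := by
    have hterm : ∀ d ∈ Finset.Icc 1 K,
        ((q : ℝ)) ^ (d + (n - m * d)) = (q : ℝ) ^ n * x ^ d := by
      intro d hdmem
      rw [Finset.mem_Icc] at hdmem
      have hmd : m * d ≤ n := by
        rw [Nat.mul_comm]
        exact (Nat.le_div_iff_mul_le hm0).mp hdmem.2
      have hdmd : d ≤ m * d := Nat.le_mul_of_pos_left d hm0
      have hexp : (d + (n - m * d)) + (m - 1) * d = n := by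
        rw [Nat.sub_mul, one_mul]
        omega
      have hq' : (q : ℝ) ^ ((d + (n - m * d)) + (m - 1) * d) = (q : ℝ) ^ n := by
        rw [hexp]
      rw [pow_add, pow_mul] at hq'
      rw [hx, ← inv_pow]
      have hne : ((q : ℝ) ^ (m - 1)) ^ d ≠ 0 := by positivity
      rw [inv_pow, inv_pow, ← hq', mul_assoc, mul_inv_cancel₀ hne, mul_one]
    rw [Finset.sum_congr rfl hterm, ← Finset.mul_sum]
    have hgeom : (∑ d ∈ Finset.Icc 1 K, x ^ d) ≤ 2 * x := by
      have h1 : Finset.Icc 1 K = Finset.Ico 1 (K + 1) := by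
        rw [Finset.Ico_add_one_right_eq_Icc]
      rw [h1, Finset.sum_Ico_eq_sum_range]
      have h2 : ∀ i ∈ Finset.range (K + 1 - 1), x ^ (1 + i) = x * x ^ i := by
        intro i _; rw [pow_add, pow_one]
      rw [Finset.sum_congr rfl h2, ← Finset.mul_sum]
      have hxne1 : x ≠ 1 := by linarith
      have hgs : (∑ i ∈ Finset.range (K + 1 - 1), x ^ i) ≤ 2 := by
        rw [geom_sum_eq hxne1]
        rw [div_le_iff_of_neg (by linarith : x - 1 < 0)]
        nlinarith [pow_nonneg hx0.le (K + 1 - 1)]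
      calc x * (∑ i ∈ Finset.range (K + 1 - 1), x ^ i) ≤ x * 2 :=
        mul_le_mul_of_nonneg_left hgs hx0.le
      _ = 2 * x := by ring
    calc (q : ℝ) ^ n * (∑ d ∈ Finset.Icc 1 K, x ^ d) ≤ (q : ℝ) ^ n * (2 * x) :=
      mul_le_mul_of_nonneg_left hgeom (by positivity)
    _ = 2 * (q : ℝ) ^ n * x := by ring
  -- key analytic estimate : 2 * L ^ r < q ^ (m-1)
  have hlog2 := Real.log_two_gt_d9
  have hLr : L ^ r = Real.exp (D / 2) := by
    rw [Real.rpow_def_of_pos hL0, hDdef]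
    congr 1
    ring
  have hkey : 2 * L ^ r < (q : ℝ) ^ (m - 1) := by
    have h1 : ((2 : ℝ)) ^ (m - 1 : ℕ) ≤ (q : ℝ) ^ (m - 1 : ℕ) :=
      pow_le_pow_left₀ (by norm_num) hq2R _
    have hcast : ((m - 1 : ℕ) : ℝ) = (m : ℝ) - 1 := by
      have h1m : 1 ≤ m := hm0
      push_cast [Nat.cast_sub h1m]
      ring
    have h2 : ((2 : ℝ)) ^ ((D : ℝ) - 1) ≤ (2 : ℝ) ^ ((m - 1 : ℕ) : ℝ) := by
      apply Real.rpow_le_rpow_of_exponent_le (by norm_num)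
      rw [hcast]; linarith
    rw [Real.rpow_natCast] at h2
    have h3 : 2 * Real.exp (D / 2) < (2 : ℝ) ^ ((D : ℝ) - 1) := by
      rw [Real.rpow_def_of_pos (by norm_num : (0:ℝ) < 2)]
      have he : 2 * Real.exp (D / 2) = Real.exp (D / 2 + Real.log 2) := by
        rw [Real.exp_add, Real.exp_log (by norm_num : (0:ℝ) < 2)]; ring
      rw [he]
      apply Real.exp_lt_exp.mpr
      nlinarith
    rw [hLr]
    calc 2 * Real.exp (D / 2) < (2 : ℝ) ^ ((D : ℝ) - 1) := h3
    _ ≤ (2 : ℝ) ^ (m - 1 : ℕ) := h2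
    _ ≤ (q : ℝ) ^ (m - 1 : ℕ) := h1
  -- put everything together
  have hLr0 : 0 < L ^ r := Real.rpow_pos_of_pos hL0 r
  have hqn0 : (0 : ℝ) < (q : ℝ) ^ n := pow_pos hq0R n
  have hchain : (Nat.card (T3 F n r) : ℝ) ≤ 2 * (q : ℝ) ^ n * x := by
    calc (Nat.card (T3 F n r) : ℝ) ≤ (A.card : ℝ) := by exact_mod_cast hcard1
    _ ≤ ((∑ d ∈ Finset.Icc 1 K, q ^ (d + (n - m * d)) : ℕ) : ℝ) := by exact_mod_cast hcard2
    _ = ∑ d ∈ Finset.Icc 1 K, ((q : ℝ)) ^ (d + (n - m * d)) := by push_cast; rfl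
    _ ≤ 2 * (q : ℝ) ^ n * x := hsum3
  have hfinal : 2 * (q : ℝ) ^ n * x < (q : ℝ) ^ n / L ^ r := by
    rw [hx, mul_assoc, ← div_eq_mul_inv, ← mul_div_assoc, div_lt_div_iff₀ hqm0 hLr0]
    nlinarith [mul_lt_mul_of_pos_left hkey hqn0]
  exact lt_of_le_of_lt hchain hfinal
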